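/- arXiv:1011.1591 — 2 statements merged into one kernel-verified Lean document; each statement's English description precedes it below -/
import Mathlib

section
/- Let h = yᵈ + h₁(x)y^{d−1} + ⋯ + h_d(x) be a monic polynomial with coefficients in ℂ[[x]] with d ≥ 2, such that h is not of the form (y − b(x))ᵈ for any b(x) ∈ ℂ[[x]]. Then there exist an integer r > 0 and monic polynomials g₁, g₂ ∈ ℂ[[x]][y] in y of degrees d₁, d₂ < d such that h(x^r, y) = g₁(x,y)·g₂(x,y). -/
/-!
A Tschirnhaus shift `y ↦ y + b` kills the coefficient of `y^(d-1)`, and the shifted polynomial is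
not `yᵈ` because `h` is not `(y - b)ᵈ`. Choose `k₀ < d` minimising the Newton-polygon slope
`ord hₖ / (d - k)` over the nonzero lower coefficients `hₖ`, and put `r = d - k₀`, `m = ord hₖ₀`.
Then the coefficient of `yᵏ` in `h(x^r, y)` is divisible by `x^(m (d - k))`, so
`h(x^r, y) = x^(m d) H(x, y / x^m)` with `H` monic. Modulo `x`, `H` still has no `y^(d-1)` term
but has a nonzero `y^k₀` term, so it is not of the form `(y - c)ᵈ` and has a root `a` of
multiplicity `0 < μ < d`. Weierstrass preparation at `y = a` splits off a monic factor of `H` of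
degree `μ` over `ℂ⟦x⟧`; undoing the scaling and the shift factors `h(x^r, y)`.
-/

open Polynomial PowerSeries

/-- The substitution `x ↦ xⁿ` on formal power series: `(substPow n f)` is `f(xⁿ)`. -/
noncomputable def substPow {R : Type*} [Semiring R] (n : ℕ) (f : PowerSeries R) :
    PowerSeries R :=
  PowerSeries.mk fun m => if n ∣ m then PowerSeries.coeff (m / n) f else 0

/-- `P(x,y) ↦ P(xⁿ, y)` for a polynomial over power series. -/
noncomputable def substPowPoly {R : Type*} [CommSemiring R] (n : ℕ)
    (P : Polynomial (PowerSeries R)) : Polynomial (PowerSeries R) :=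
  ∑ k ∈ Finset.range (P.natDegree + 1), Polynomial.C (substPow n (P.coeff k)) * Polynomial.X ^ k

theorem substPow_eq_expand {R : Type*} [CommRing R] {r : ℕ} (hr : r ≠ 0) (f : R⟦X⟧) :
    substPow r f = PowerSeries.expand r hr f := by
  ext m
  simp [substPow, PowerSeries.coeff_expand]

theorem substPowPoly_eq_map_expand {R : Type*} [CommRing R] {r : ℕ} (hr : r ≠ 0) (P : R⟦X⟧[X]) :
    substPowPoly r P = P.map (PowerSeries.expand (R := R) r hr).toRingHom := by
  conv_rhs => rw [P.as_sum_range_C_mul_X_pow]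
  simp [substPowPoly, Polynomial.map_sum, substPow_eq_expand hr]

namespace Polynomial

variable {R : Type*} [CommRing R]

theorem coeff_taylor_natDegree_sub_one (f : R[X]) (r : R) :
    (taylor r f).coeff (f.natDegree - 1) =
      f.coeff (f.natDegree - 1) + f.natDegree * f.leadingCoeff * r := by
  rw [taylor_coeff, eval_eq_sum_range' (n := 2)
    ((natDegree_hasseDeriv_le _ _).trans_lt (by omega))]
  simp only [Finset.sum_range_succ, Finset.sum_range_zero, hasseDeriv_coeff]
  rcases Nat.eq_zero_or_pos f.natDegree with h0 | hpos
  · simp [h0, coeff_eq_zero_of_natDegree_lt]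
  · rw [show 1 + (f.natDegree - 1) = f.natDegree by omega,
      Nat.choose_symm_of_eq_add (by omega : f.natDegree = f.natDegree - 1 + 1)]
    simp

theorem Monic.taylor {p : R[X]} (hp : p.Monic) (r : R) :
    (taylor r p).Monic := by
  rw [Monic, leadingCoeff_taylor, hp.leadingCoeff]

theorem Monic.exists_coeff_taylor_natDegree_sub_one_eq_zero
    {p : R[X]} (hp : p.Monic) (hn : IsUnit (p.natDegree : R)) :
    ∃ b, (Polynomial.taylor b p).coeff (p.natDegree - 1) = 0 := by
  refine ⟨-(↑hn.unit⁻¹ * p.coeff (p.natDegree - 1)), ?_⟩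
  rw [coeff_taylor_natDegree_sub_one, hp.leadingCoeff, mul_one, mul_neg, ← mul_assoc,
    hn.mul_val_inv, one_mul, add_neg_cancel]

theorem ne_X_sub_C_pow_of_coeff_natDegree_sub_one_eq_zero
    [IsDomain R] [CharZero R] {p : R[X]} (h : p.coeff (p.natDegree - 1) = 0)
    (hX : p ≠ Polynomial.X ^ p.natDegree) (c : R) :
    p ≠ (Polynomial.X - Polynomial.C c) ^ p.natDegree := by
  intro hpc
  refine hX (hpc.trans ?_)
  rcases Nat.eq_zero_or_pos p.natDegree with h0 | hpos
  · rw [h0, pow_zero, pow_zero]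
  have hcoeff := coeff_taylor_natDegree_sub_one (Polynomial.X ^ p.natDegree : R[X]) (-c)
  rw [taylor_X_pow, C_neg, ← sub_eq_add_neg, natDegree_X_pow, ← hpc, h,
    coeff_X_pow, if_neg (by omega), leadingCoeff_X_pow] at hcoeff
  have hc : c = 0 := by simpa [hpos.ne'] using hcoeff
  rw [hc, C_0, sub_zero]

theorem taylor_eq_X_pow_iff {p : R[X]} {b : R} {n : ℕ} :
    taylor b p = Polynomial.X ^ n ↔ p = (Polynomial.X - Polynomial.C b) ^ n := by
  constructor <;> intro h
  · rw [← taylor_zero p, ← neg_add_cancel b, ← taylor_taylor, h, taylor_X_pow, C_neg,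
      ← sub_eq_add_neg]
  · rw [h, taylor_pow, map_sub, taylor_X, taylor_C, add_sub_cancel_right]

theorem coeff_eq_zero_of_scaleRoots_eq [NoZeroDivisors R]
    {p q : R[X]} {s : R} (hs : s ≠ 0) (h : p.scaleRoots s = q) {i : ℕ} (hi : q.coeff i = 0) :
    p.coeff i = 0 := by
  rw [← h, coeff_scaleRoots] at hi
  exact (mul_eq_zero.1 hi).resolve_right (pow_ne_zero _ hs)

theorem Monic.exists_scaleRoots_eq [Nontrivial R]
    {P : R[X]} (hP : P.Monic) {s : R} (hs : ∀ i, s ^ (P.natDegree - i) ∣ P.coeff i) :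
    ∃ Q : R[X], Q.Monic ∧ Q.scaleRoots s = P := by
  choose c hc using hs
  set d := P.natDegree
  set Q := ∑ i ∈ Finset.range (d + 1), monomial i (c i)
  have hQ : ∀ i, Q.coeff i = if i ≤ d then c i else 0 := fun i ↦ by
    simp [Q, coeff_monomial]
  have hcd : c d = 1 := by
    have hd : P.coeff d = 1 := hP.coeff_natDegree
    simpa [hd] using (hc d).symm
  have hQd : Q.natDegree ≤ d :=
    natDegree_le_iff_coeff_eq_zero.2 fun i hi ↦ by rw [hQ, if_neg (by omega)]
  have hQd1 : Q.coeff d = 1 := by rw [hQ, if_pos le_rfl, hcd]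
  have hQdeg : Q.natDegree = d := natDegree_eq_of_le_of_coeff_ne_zero hQd (by simp [hQd1])
  refine ⟨Q, monic_of_natDegree_le_of_coeff_eq_one d hQd hQd1, ext fun i ↦ ?_⟩
  rw [coeff_scaleRoots, hQdeg, hQ]
  split_ifs with hi
  · rw [hc i, mul_comm]
  · rw [zero_mul, coeff_eq_zero_of_natDegree_lt (by omega)]

end Polynomial

theorem IsAlgClosed.exists_rootMultiplicity_pos_lt {K : Type*} [Field K] [IsAlgClosed K]
    {p : K[X]} (hp : p.Monic) (hne : ∀ c, p ≠ (Polynomial.X - Polynomial.C c) ^ p.natDegree) :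
    ∃ a, 0 < p.rootMultiplicity a ∧ p.rootMultiplicity a < p.natDegree := by
  have hdeg : 0 < p.natDegree := Nat.pos_of_ne_zero fun h0 ↦
    hne 0 (by rw [h0, pow_zero, ← hp.natDegree_eq_zero, h0])
  obtain ⟨a, ha⟩ := IsAlgClosed.exists_root p (by
    rw [degree_eq_natDegree hp.ne_zero]; exact_mod_cast hdeg.ne')
  have hdvd := p.pow_rootMultiplicity_dvd a
  have hle := natDegree_le_of_dvd hdvd hp.ne_zero
  rw [natDegree_pow, natDegree_X_sub_C, mul_one] at hle
  refine ⟨a, (rootMultiplicity_pos hp.ne_zero).2 ha, hle.lt_of_ne fun heq ↦ hne a ?_⟩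
  rw [← heq]
  exact eq_of_monic_of_dvd_of_natDegree_le ((monic_X_sub_C a).pow _) hp hdvd (by
    rw [natDegree_pow, natDegree_X_sub_C, mul_one, heq])

namespace PowerSeries

variable {R k : Type*} [CommRing R] [Field k]

theorem expand_eq_X_pow_mul {r : ℕ} (hr : r ≠ 0) (φ : R⟦X⟧) :
    expand r hr φ = PowerSeries.X ^ (r * φ.order.toNat) * expand r hr φ.divXPowOrder := by
  conv_lhs => rw [← X_pow_order_mul_divXPowOrder (f := φ)]
  rw [map_mul, map_pow, expand_X, pow_mul]

theorem smodEq_span_X_pow_iff {n : ℕ} {f g : R⟦X⟧} :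
    f ≡ g [SMOD (Ideal.span {(PowerSeries.X : R⟦X⟧)} ^ n • ⊤ : Submodule R⟦X⟧ R⟦X⟧)] ↔
      ∀ i < n, coeff i f = coeff i g := by
  simp only [SModEq.sub_mem, smul_eq_mul, Ideal.mul_top, Ideal.span_singleton_pow,
    Ideal.mem_span_singleton, PowerSeries.X_pow_dvd_iff, map_sub, sub_eq_zero]

instance isAdicComplete_span_X :
    IsAdicComplete (Ideal.span {(PowerSeries.X : R⟦X⟧)}) R⟦X⟧ where
  haus' f hf := by
    ext i
    simpa using smodEq_span_X_pow_iff.1 (hf (i + 1)) i (by omega)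
  prec' f hf := by
    refine ⟨mk fun i ↦ coeff i (f (i + 1)), fun n ↦ smodEq_span_X_pow_iff.2 fun i hi ↦ ?_⟩
    rw [coeff_mk]
    exact (smodEq_span_X_pow_iff.1 (hf (by omega : i + 1 ≤ n)) i (by omega)).symm

instance isAdicComplete_maximalIdeal :
    IsAdicComplete (IsLocalRing.maximalIdeal k⟦X⟧) k⟦X⟧ := by
  rw [maximalIdeal_eq_span_X]
  infer_instance

theorem residue_eq_zero_iff_constantCoeff_eq_zero (a : k⟦X⟧) :
    IsLocalRing.residue k⟦X⟧ a = 0 ↔ constantCoeff a = 0 := by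
  rw [IsLocalRing.residue_eq_zero_iff, maximalIdeal_eq_span_X, Ideal.mem_span_singleton,
    PowerSeries.X_dvd_iff]

end PowerSeries

namespace Polynomial.Monic

variable {k : Type*} [Field k]

theorem exists_min_order_slope {R : Type*} [Semiring R] {P : R⟦X⟧[X]} (hP : P.Monic)
    (hne : P ≠ Polynomial.X ^ P.natDegree) :
    ∃ k₀ < P.natDegree, P.coeff k₀ ≠ 0 ∧ ∀ i < P.natDegree, P.coeff i ≠ 0 →
      (P.coeff k₀).order.toNat * (P.natDegree - i) ≤
        (P.natDegree - k₀) * (P.coeff i).order.toNat := by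
  classical
  set d := P.natDegree
  set S := (Finset.range d).filter (P.coeff · ≠ 0)
  have hS : S.Nonempty := by
    by_contra hS
    refine hne (ext fun i ↦ ?_)
    rw [coeff_X_pow]
    split_ifs with hi
    · exact hi ▸ hP.coeff_natDegree
    · by_contra hne'
      rcases lt_or_gt_of_ne hi with hlt | hgt
      · exact hS ⟨i, by simp [S, hlt, hne']⟩
      · exact hne' (coeff_eq_zero_of_natDegree_lt hgt)
  obtain ⟨k₀, hk₀S, hk₀⟩ :=
    S.exists_min_image (fun i ↦ ((P.coeff i).order.toNat : ℚ) / (d - i)) hS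
  obtain ⟨hk₀d, hk₀0⟩ : k₀ < d ∧ P.coeff k₀ ≠ 0 := by simpa [S] using hk₀S
  refine ⟨k₀, hk₀d, hk₀0, fun i hid hi ↦ ?_⟩
  have h := hk₀ i (by simp [S, hid, hi])
  rw [div_le_div_iff₀ (by simp [hk₀d]) (by simp [hid])] at h
  rw [← Nat.cast_le (α := ℚ)]
  push_cast [Nat.cast_sub hid.le, Nat.cast_sub hk₀d.le]
  linarith

theorem exists_map_expand_eq_scaleRoots {R : Type*} [CommRing R] [IsDomain R]
    {P : R⟦X⟧[X]} (hP : P.Monic) (hne : P ≠ Polynomial.X ^ P.natDegree) :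
    ∃ (r : ℕ) (hr : r ≠ 0) (m : ℕ) (Q : R⟦X⟧[X]), Q.Monic ∧
      P.map (PowerSeries.expand r hr).toRingHom = Q.scaleRoots (PowerSeries.X ^ m) ∧
      Q.map PowerSeries.constantCoeff ≠ Polynomial.X ^ Q.natDegree := by
  obtain ⟨k₀, hk₀d, hk₀0, hslope⟩ := hP.exists_min_order_slope hne
  set d := P.natDegree
  set r := d - k₀
  set m := (P.coeff k₀).order.toNat
  have hr : r ≠ 0 := by omega
  have hdvd : ∀ i, (PowerSeries.X ^ m) ^ (d - i) ∣ PowerSeries.expand r hr (P.coeff i) := by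
    intro i
    rcases lt_or_ge i d with hid | hid
    · by_cases hi : P.coeff i = 0
      · simp [hi]
      rw [PowerSeries.expand_eq_X_pow_mul, ← pow_mul]
      exact (pow_dvd_pow _ (hslope i hid hi)).mul_right _
    · simp [Nat.sub_eq_zero_of_le hid]
  obtain ⟨Q, hQ, hQP⟩ := (hP.map (PowerSeries.expand r hr).toRingHom).exists_scaleRoots_eq
    (s := PowerSeries.X ^ m) (by simpa [hP.natDegree_map] using hdvd)
  have hQd : Q.natDegree = d := by
    rw [← natDegree_scaleRoots Q (PowerSeries.X ^ m), hQP, hP.natDegree_map]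
  refine ⟨r, hr, m, Q, hQ, hQP.symm, fun hQX ↦ ?_⟩
  have hQk₀ : Q.coeff k₀ = PowerSeries.expand r hr (P.coeff k₀).divXPowOrder := by
    have h := congr_arg (coeff · k₀) hQP
    simp only [coeff_scaleRoots, coeff_map, hQd, AlgHom.toRingHom_eq_coe, RingHom.coe_coe] at h
    rw [PowerSeries.expand_eq_X_pow_mul, ← pow_mul, mul_comm, mul_comm r] at h
    exact PowerSeries.X_pow_mul_cancel h
  have h := congr_arg (coeff · k₀) hQX
  simp only [coeff_map, hQk₀, PowerSeries.constantCoeff_expand, hQd, coeff_X_pow,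
    if_neg hk₀d.ne] at h
  exact PowerSeries.constantCoeff_divXPowOrder_eq_zero_iff.not.2 hk₀0 h

theorem exists_factor_natDegree_eq_natTrailingDegree
    {P : k⟦X⟧[X]} (hP : P.Monic) :
    ∃ f q : k⟦X⟧[X], f.Monic ∧ q.Monic ∧
      f.natDegree = (P.map PowerSeries.constantCoeff).natTrailingDegree ∧ P = f * q := by
  set m := (P.map PowerSeries.constantCoeff).natTrailingDegree
  have hP0 : P.map PowerSeries.constantCoeff ≠ 0 := (hP.map _).ne_zero
  have hcoeff : ∀ i, PowerSeries.coeff i ((P : k⟦X⟧⟦X⟧).map (IsLocalRing.residue k⟦X⟧)) = 0 ↔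
      (P.map PowerSeries.constantCoeff).coeff i = 0 := fun i ↦ by
    rw [PowerSeries.coeff_map, Polynomial.coeff_coe,
      PowerSeries.residue_eq_zero_iff_constantCoeff_eq_zero, Polynomial.coeff_map]
  have horder : ((P : k⟦X⟧⟦X⟧).map (IsLocalRing.residue k⟦X⟧)).order = m := by
    rw [PowerSeries.order_eq_nat, Ne, hcoeff]
    exact ⟨mt trailingCoeff_eq_zero.1 hP0,
      fun i hi ↦ (hcoeff i).2 (coeff_eq_zero_of_lt_natTrailingDegree hi)⟩
  obtain ⟨f, u, H⟩ := PowerSeries.exists_isWeierstrassFactorization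
    (PowerSeries.order_finite_iff_ne_zero.1 (horder ▸ ENat.natCast_lt_top m))
  have hf := H.isDistinguishedAt
  have hforder : ((f : k⟦X⟧⟦X⟧).map (Ideal.Quotient.mk (IsLocalRing.maximalIdeal k⟦X⟧))).order =
      f.natDegree :=
    (hf.coe_natDegree_eq_order_map _ 1 (by simp) (mul_one _).symm).symm
  -- `P = f * (P /ₘ f) + P %ₘ f` and `P = f * u` are two Weierstrass divisions of `P` by `f`.
  have hdiv := P.modByMonic_add_div f
  obtain ⟨-, hrem⟩ := hf.isWeierstrassDivisorAt'.eq_of_mul_add_eq_mul_add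
    (q := P /ₘ f) (q' := u) (r := P %ₘ f) (r' := 0)
    (by rw [hforder, ENat.toNat_natCast, ← degree_eq_natDegree hf.monic.ne_zero]
        exact degree_modByMonic_lt _ hf.monic)
    (by simp)
    (by rw [Polynomial.coe_zero, add_zero, ← H.eq_mul, ← Polynomial.coe_mul,
      ← Polynomial.coe_add, add_comm, hdiv])
  rw [hrem, zero_add] at hdiv
  refine ⟨f, P /ₘ f, hf.monic, hf.monic.of_mul_monic_left (by rwa [hdiv]), ?_, hdiv.symm⟩
  rw [H.natDegree_eq_toNat_order_map, horder, ENat.toNat_natCast]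

theorem exists_factor_natDegree_eq_rootMultiplicity
    {P : k⟦X⟧[X]} (hP : P.Monic) (a : k) :
    ∃ f q : k⟦X⟧[X], f.Monic ∧ q.Monic ∧
      f.natDegree = (P.map PowerSeries.constantCoeff).rootMultiplicity a ∧ P = f * q := by
  obtain ⟨f, q, hf, hq, hdeg, hfq⟩ :=
    (hP.taylor (PowerSeries.C a)).exists_factor_natDegree_eq_natTrailingDegree
  refine ⟨Polynomial.taylor (-PowerSeries.C a) f, Polynomial.taylor (-PowerSeries.C a) q,
    hf.taylor _, hq.taylor _, ?_, ?_⟩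
  · rw [natDegree_taylor, hdeg, map_taylor, PowerSeries.constantCoeff_C,
      rootMultiplicity_eq_natTrailingDegree, taylor_apply]
  · rw [← taylor_mul, ← hfq, taylor_taylor, neg_add_cancel, taylor_zero]

theorem exists_factor_natDegree_lt [IsAlgClosed k]
    {P : k⟦X⟧[X]} (hP : P.Monic)
    (hne : ∀ c, P.map PowerSeries.constantCoeff ≠ (Polynomial.X - Polynomial.C c) ^ P.natDegree) :
    ∃ f q : k⟦X⟧[X], f.Monic ∧ q.Monic ∧ f.natDegree < P.natDegree ∧
      q.natDegree < P.natDegree ∧ P = f * q := by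
  have hdeg := hP.natDegree_map PowerSeries.constantCoeff
  obtain ⟨a, ha0, had⟩ := IsAlgClosed.exists_rootMultiplicity_pos_lt (hP.map _) (hdeg.symm ▸ hne)
  obtain ⟨f, q, hf, hq, hfa, rfl⟩ := hP.exists_factor_natDegree_eq_rootMultiplicity a
  have hsum := hf.natDegree_mul hq
  refine ⟨f, q, hf, hq, by omega, by omega, rfl⟩

theorem exists_map_expand_eq_mul [IsAlgClosed k] [CharZero k]
    {P : k⟦X⟧[X]} (hP : P.Monic) (h1 : P.coeff (P.natDegree - 1) = 0)
    (hne : P ≠ Polynomial.X ^ P.natDegree) :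
    ∃ (r : ℕ) (hr : r ≠ 0) (g₁ g₂ : k⟦X⟧[X]), g₁.Monic ∧ g₂.Monic ∧
      g₁.natDegree < P.natDegree ∧ g₂.natDegree < P.natDegree ∧
      P.map (PowerSeries.expand r hr).toRingHom = g₁ * g₂ := by
  obtain ⟨r, hr, m, Q, hQ, hPQ, hQX⟩ := hP.exists_map_expand_eq_scaleRoots hne
  have hQd : Q.natDegree = P.natDegree := by
    rw [← natDegree_scaleRoots Q (PowerSeries.X ^ m), ← hPQ, hP.natDegree_map]
  have hQ1 : Q.coeff (Q.natDegree - 1) = 0 :=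
    coeff_eq_zero_of_scaleRoots_eq (pow_ne_zero _ PowerSeries.X_ne_zero) hPQ.symm
      (by rw [Polynomial.coeff_map, hQd, h1, map_zero])
  have hdeg := hQ.natDegree_map PowerSeries.constantCoeff
  obtain ⟨f, q, hf, hq, hfd, hqd, rfl⟩ := hQ.exists_factor_natDegree_lt fun c ↦ hdeg ▸
    ne_X_sub_C_pow_of_coeff_natDegree_sub_one_eq_zero
      (by rw [hdeg, Polynomial.coeff_map, hQ1, map_zero]) (hdeg.symm ▸ hQX) c
  refine ⟨r, hr, f.scaleRoots (PowerSeries.X ^ m), q.scaleRoots (PowerSeries.X ^ m),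
    (monic_scaleRoots_iff _).2 hf, (monic_scaleRoots_iff _).2 hq,
    by rwa [natDegree_scaleRoots, ← hQd], by rwa [natDegree_scaleRoots, ← hQd], ?_⟩
  rw [hPQ, mul_scaleRoots' _ _ _ (by simp [hf.leadingCoeff, hq.leadingCoeff])]

end Polynomial.Monic

/-- If `h` is monic of degree `d ≥ 2` over `ℂ[[x]]` and is not of the form
`(y − b(x))ᵈ`, then there are `r > 0` and monic `g₁, g₂ ∈ ℂ[[x]][y]` of degrees `< d` with
`h(x^r, y) = g₁ g₂`. -/
theorem stmt5 (d : ℕ) (hd : 2 ≤ d) (h : Polynomial (PowerSeries ℂ)) (hmonic : h.Monic)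
    (hdeg : h.natDegree = d)
    (hnot : ¬ ∃ b : PowerSeries ℂ, h = (Polynomial.X - Polynomial.C b) ^ d) :
    ∃ r : ℕ, 0 < r ∧ ∃ g₁ g₂ : Polynomial (PowerSeries ℂ),
      g₁.Monic ∧ g₂.Monic ∧ g₁.natDegree < d ∧ g₂.natDegree < d ∧
      substPowPoly r h = g₁ * g₂ := by
  obtain ⟨b, hb⟩ := hmonic.exists_coeff_taylor_natDegree_sub_one_eq_zero (by
    rw [hdeg, ← map_natCast PowerSeries.C]
    exact (IsUnit.mk0 (d : ℂ) (by norm_cast; omega)).map _)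
  have hbdeg : (Polynomial.taylor b h).natDegree = d := by rw [natDegree_taylor, hdeg]
  obtain ⟨r, hr, g₁, g₂, hg₁, hg₂, hg₁d, hg₂d, hg⟩ :=
    (hmonic.taylor b).exists_map_expand_eq_mul (by rwa [natDegree_taylor])
      fun hX ↦ hnot ⟨b, by rwa [hbdeg, taylor_eq_X_pow_iff] at hX⟩
  set E := (PowerSeries.expand (R := ℂ) r hr).toRingHom
  refine ⟨r, Nat.pos_of_ne_zero hr, Polynomial.taylor (-E b) g₁, Polynomial.taylor (-E b) g₂,
    hg₁.taylor _, hg₂.taylor _, by rwa [natDegree_taylor, ← hbdeg],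
    by rwa [natDegree_taylor, ← hbdeg], ?_⟩
  rw [substPowPoly_eq_map_expand hr, ← taylor_mul, ← hg, map_taylor, taylor_taylor,
    neg_add_cancel, taylor_zero]
end

section
/- Let f, g be real analytic functions near 0 ∈ ℝ² that are monic polynomials in y over convergent real power series in x, with g having an isolated zero at the origin. Let h be the (monic, after a suitable linear change of coordinates) polynomial y(g f_x − f g_x) − x(g f_y − f g_y), and let σ₁(t), …, σ_l(t) be the real-coefficient Puiseux parametrizations with σ_i(0) = 0 arising from the factorization h(t^N, y) = ∏_j (y − σ_j(t)) (i.e., those σ_j that are real series vanishing at 0). Then lim_{(x,y)→(0,0)} f(x,y)/g(x,y) exists if and only if for each i = 1, …, l the one-variable limit L_i = lim_{t→0} f(t^N, σ_i(t))/g(t^N, σ_i(t)) exists and L₁ = ⋯ = L_l. -/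
/-!
On the orbit of a point `p ≠ 0` under the rotations of the plane, `f / g` is a smooth
`2π`-periodic function of the angle, so it attains its maximum and minimum at critical points,
and these are exactly the zeros of `h` on that circle. Hence `f p / g p` is squeezed between two
values of `f / g` on `{h = 0}`, which near the origin is the union of the curves
`t ↦ (t ^ N, σ i t)`; if `f / g` tends to `L` along every curve, it tends to `L` on the punctured
plane. The converse is composition of limits.
-/

open Filter Function Real Set Topology

theorem Function.Periodic.exists_hasDerivAt_eq_zero_le {φ φ' : ℝ → ℝ} {c : ℝ}
    (hp : Periodic φ c) (hc : c ≠ 0) (hφ : ∀ θ, HasDerivAt φ (φ' θ) θ) (x : ℝ) :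
    ∃ θ, φ' θ = 0 ∧ φ x ≤ φ θ := by
  have hcont : Continuous φ := continuous_iff_continuousAt.2 fun θ => (hφ θ).continuousAt
  obtain ⟨_, ⟨θ, rfl⟩, hmax⟩ :=
    (hp.compact_of_continuous hc hcont).exists_isGreatest (range_nonempty φ)
  have hloc : IsLocalMax φ θ :=
    IsMaxOn.isLocalMax (fun y _ => hmax ⟨y, rfl⟩) univ_mem
  exact ⟨θ, hloc.hasDerivAt_eq_zero (hφ θ), hmax ⟨x, rfl⟩⟩

theorem Function.Periodic.exists_hasDerivAt_eq_zero_ge {φ φ' : ℝ → ℝ} {c : ℝ}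
    (hp : Periodic φ c) (hc : c ≠ 0) (hφ : ∀ θ, HasDerivAt φ (φ' θ) θ) (x : ℝ) :
    ∃ θ, φ' θ = 0 ∧ φ θ ≤ φ x := by
  obtain ⟨θ, hθ, hle⟩ := (hp.comp Neg.neg).exists_hasDerivAt_eq_zero_le (φ' := fun θ => -φ' θ)
    hc (fun θ => (hφ θ).neg) x
  exact ⟨θ, neg_eq_zero.1 hθ, neg_le_neg_iff.1 hle⟩

theorem abs_mul_add_mul_le (a b u v : ℝ) (hu : |u| ≤ 1) (hv : |v| ≤ 1) :
    |a * u + b * v| ≤ 2 * max |a| |b| := by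
  calc |a * u + b * v| ≤ |a| * |u| + |b| * |v| := by
        simpa only [abs_mul] using abs_add_le (a * u) (b * v)
    _ ≤ max |a| |b| * 1 + max |a| |b| * 1 := by gcongr <;> simp
    _ = 2 * max |a| |b| := by ring

noncomputable def planeRotation (θ : ℝ) (p : ℝ × ℝ) : ℝ × ℝ :=
  (p.1 * cos θ - p.2 * sin θ, p.1 * sin θ + p.2 * cos θ)

section planeRotation

variable (p : ℝ × ℝ) (θ : ℝ)

@[simp]
theorem planeRotation_zero : planeRotation 0 p = p := by
  simp [planeRotation]

theorem periodic_planeRotation : Periodic (planeRotation · p) (2 * π) := fun θ => by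
  simp only [planeRotation, cos_add_two_pi, sin_add_two_pi]

theorem hasDerivAt_planeRotation :
    HasDerivAt (planeRotation · p) (-(planeRotation θ p).2, (planeRotation θ p).1) θ := by
  have hx := ((hasDerivAt_cos θ).const_mul p.1).sub ((hasDerivAt_sin θ).const_mul p.2)
  have hy := ((hasDerivAt_sin θ).const_mul p.1).add ((hasDerivAt_cos θ).const_mul p.2)
  convert hx.prodMk hy using 1
  · rfl
  · ext <;> simp only [planeRotation] <;> ring

@[simp]
theorem planeRotation_zero_right : planeRotation θ 0 = 0 := by
  simp [planeRotation]

theorem planeRotation_neg_planeRotation :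
    planeRotation (-θ) (planeRotation θ p) = p := by
  have h := sin_sq_add_cos_sq θ
  ext <;> simp only [planeRotation, cos_neg, sin_neg]
  · linear_combination p.1 * h
  · linear_combination p.2 * h

theorem norm_planeRotation_le : ‖planeRotation θ p‖ ≤ 2 * ‖p‖ := by
  have hs : |-sin θ| ≤ 1 := by simpa using abs_sin_le_one θ
  simp only [planeRotation, Prod.norm_def, Real.norm_eq_abs]
  refine max_le ?_ ?_
  · simpa only [sub_eq_add_neg, ← mul_neg] using
      abs_mul_add_mul_le p.1 p.2 _ _ (abs_cos_le_one θ) hs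
  · exact abs_mul_add_mul_le p.1 p.2 _ _ (abs_sin_le_one θ) (abs_cos_le_one θ)

end planeRotation

theorem planeRotation_eq_zero_iff {θ : ℝ} {p : ℝ × ℝ} : planeRotation θ p = 0 ↔ p = 0 := by
  refine ⟨fun h => ?_, fun h => h ▸ planeRotation_zero_right θ⟩
  rw [← planeRotation_neg_planeRotation p θ, h, planeRotation_zero_right]

theorem ContinuousLinearMap.apply_prod_mk (L : ℝ × ℝ →L[ℝ] ℝ) (a b : ℝ) :
    L (a, b) = a * L (1, 0) + b * L (0, 1) := by
  rw [← smul_eq_mul, ← smul_eq_mul, ← map_smul, ← map_smul, ← map_add]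
  simp

/-- The polynomial `h` of the statement: `-h / g²` is the derivative of `f / g` along the
rotation field `(-y, x)`, so on a circle about the origin `f / g` is critical exactly where
`h` vanishes. -/
noncomputable def angularWronskian (f g : ℝ × ℝ → ℝ) (p : ℝ × ℝ) : ℝ :=
  p.2 * (g p * fderiv ℝ f p (1, 0) - f p * fderiv ℝ g p (1, 0)) -
    p.1 * (g p * fderiv ℝ f p (0, 1) - f p * fderiv ℝ g p (0, 1))

section angularWronskian

variable {f g : ℝ × ℝ → ℝ} {p : ℝ × ℝ}

theorem hasDerivAt_div_planeRotation {θ : ℝ} (hf : DifferentiableAt ℝ f (planeRotation θ p))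
    (hg : DifferentiableAt ℝ g (planeRotation θ p)) (hg0 : g (planeRotation θ p) ≠ 0) :
    HasDerivAt (fun θ => f (planeRotation θ p) / g (planeRotation θ p))
      (-angularWronskian f g (planeRotation θ p) / g (planeRotation θ p) ^ 2) θ := by
  have hγ := hasDerivAt_planeRotation p θ
  have hfγ := hf.hasFDerivAt.comp_hasDerivAt θ hγ
  have hgγ := hg.hasFDerivAt.comp_hasDerivAt θ hγ
  refine (hfγ.div hgγ hg0).congr_deriv ?_
  set q := planeRotation θ p
  rw [comp_apply, comp_apply, angularWronskian, (fderiv ℝ f q).apply_prod_mk (-q.2) q.1,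
    (fderiv ℝ g q).apply_prod_mk (-q.2) q.1]
  ring

theorem exists_angularWronskian_eq_zero_div_le_and_le
    (hf : ∀ θ, DifferentiableAt ℝ f (planeRotation θ p))
    (hg : ∀ θ, DifferentiableAt ℝ g (planeRotation θ p)) (hg0 : ∀ θ, g (planeRotation θ p) ≠ 0) :
    (∃ θ, angularWronskian f g (planeRotation θ p) = 0 ∧
        f p / g p ≤ f (planeRotation θ p) / g (planeRotation θ p)) ∧
      ∃ θ, angularWronskian f g (planeRotation θ p) = 0 ∧
        f (planeRotation θ p) / g (planeRotation θ p) ≤ f p / g p := by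
  have hper : Periodic (fun θ => f (planeRotation θ p) / g (planeRotation θ p)) (2 * π) :=
    fun θ => by simp only [periodic_planeRotation p θ]
  have hderiv θ := hasDerivAt_div_planeRotation (hf θ) (hg θ) (hg0 θ)
  have hW {θ} (h : -angularWronskian f g (planeRotation θ p) / g (planeRotation θ p) ^ 2 = 0) :
      angularWronskian f g (planeRotation θ p) = 0 := by
    simpa [hg0 θ] using h
  obtain ⟨θ₁, h₁, hle₁⟩ := hper.exists_hasDerivAt_eq_zero_le two_pi_pos.ne' hderiv 0
  obtain ⟨θ₂, h₂, hle₂⟩ := hper.exists_hasDerivAt_eq_zero_ge two_pi_pos.ne' hderiv 0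
  simp only [planeRotation_zero] at hle₁ hle₂
  exact ⟨⟨θ₁, hW h₁, hle₁⟩, θ₂, hW h₂, hle₂⟩

end angularWronskian

theorem tendsto_div_nhdsNE_of_tendsto_angularWronskian_eq_zero {f g : ℝ × ℝ → ℝ} {L : ℝ}
    (hf : ∀ᶠ p in 𝓝 0, DifferentiableAt ℝ f p) (hg : ∀ᶠ p in 𝓝 0, DifferentiableAt ℝ g p)
    (hg0 : ∀ᶠ p in 𝓝[≠] 0, g p ≠ 0)
    (hL : Tendsto (fun p => f p / g p) (𝓝[{p | p ≠ 0 ∧ angularWronskian f g p = 0}] 0) (𝓝 L)) :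
    Tendsto (fun p => f p / g p) (𝓝[≠] 0) (𝓝 L) := by
  rw [Metric.tendsto_nhdsWithin_nhds] at hL ⊢
  intro ε hε
  obtain ⟨η, hη, hnear⟩ := hL ε hε
  obtain ⟨ρ, hρ, hgood⟩ := Metric.eventually_nhds_iff.1 <|
    hf.and (hg.and (eventually_nhdsWithin_iff.1 hg0))
  refine ⟨min η ρ / 2, by positivity, fun p hp hpr => ?_⟩
  have hp0 : p ≠ 0 := hp
  have horbit θ : dist (planeRotation θ p) 0 < min η ρ := by
    rw [dist_zero_right] at hpr ⊢
    linarith [norm_planeRotation_le p θ]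
  have hreg θ := hgood ((horbit θ).trans_le (min_le_right _ _))
  have hrot0 θ : planeRotation θ p ≠ 0 := planeRotation_eq_zero_iff.not.2 hp0
  have hclose θ (hW : angularWronskian f g (planeRotation θ p) = 0) :=
    hnear ⟨hrot0 θ, hW⟩ ((horbit θ).trans_le (min_le_left _ _))
  obtain ⟨⟨θ₁, hW₁, hle₁⟩, θ₂, hW₂, hle₂⟩ := exists_angularWronskian_eq_zero_div_le_and_le
    (fun θ => (hreg θ).1) (fun θ => (hreg θ).2.1) (fun θ => (hreg θ).2.2 (hrot0 θ))
  have h₁ := hclose θ₁ hW₁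
  have h₂ := hclose θ₂ hW₂
  rw [Real.dist_eq, abs_lt] at h₁ h₂ ⊢
  constructor <;> linarith

theorem tendsto_pow_prodMk_nhdsNE {N : ℕ} (hN : N ≠ 0) {σ : ℝ → ℝ} (hσ : ContinuousAt σ 0)
    (hσ0 : σ 0 = 0) : Tendsto (fun t => (t ^ N, σ t)) (𝓝[≠] 0) (𝓝[≠] 0) := by
  refine tendsto_nhdsWithin_of_tendsto_nhds_of_eventually_within _ ?_ ?_
  · have h : Tendsto (fun t : ℝ => (t ^ N, σ t)) (𝓝 0) (𝓝 ((0 : ℝ) ^ N, σ 0)) :=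
      ((continuous_pow N).tendsto 0).prodMk_nhds hσ
    rw [zero_pow hN, hσ0] at h
    exact h.mono_left nhdsWithin_le_nhds
  · filter_upwards [self_mem_nhdsWithin] with t ht h
    exact ht (pow_eq_zero_iff hN |>.1 (congrArg Prod.fst h))

theorem tendsto_nhdsWithin_of_tendsto_comp_pow_prodMk {F : ℝ × ℝ → ℝ} {Z : Set (ℝ × ℝ)}
    {N : ℕ} (hN : N ≠ 0) {ι : Type*} [Finite ι] {σ : ι → ℝ → ℝ} {L : ℝ}
    (hZ : ∀ᶠ p in 𝓝[Z] 0, ∃ i, ∃ t : ℝ, t ≠ 0 ∧ p = (t ^ N, σ i t))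
    (hF : ∀ i, Tendsto (fun t => F (t ^ N, σ i t)) (𝓝[≠] 0) (𝓝 L)) :
    Tendsto F (𝓝[Z] 0) (𝓝 L) := by
  rw [Metric.tendsto_nhds]
  intro ε hε
  have hall : ∀ᶠ t in 𝓝[≠] (0 : ℝ), ∀ i, dist (F (t ^ N, σ i t)) L < ε :=
    eventually_all.2 fun i => Metric.tendsto_nhds.1 (hF i) ε hε
  obtain ⟨δ, hδ, hball⟩ := Metric.mem_nhdsWithin_iff.1 hall
  filter_upwards [hZ, nhdsWithin_le_nhds (Metric.ball_mem_nhds 0 (pow_pos hδ N))]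
    with p ⟨i, t, ht, hp⟩ hpδ
  subst hp
  have htδ : |t| < δ := by
    rw [Metric.mem_ball, dist_zero_right] at hpδ
    refine (pow_lt_pow_iff_left₀ (abs_nonneg t) hδ.le hN).1 ?_
    calc |t| ^ N = ‖(t ^ N, σ i t).1‖ := by rw [Real.norm_eq_abs, abs_pow]
      _ ≤ ‖(t ^ N, σ i t)‖ := norm_fst_le _
      _ < δ ^ N := hpδ
  exact hball ⟨by rwa [Metric.mem_ball, Real.dist_eq, sub_zero], ht⟩ i

/-- main theorem: Let `f, g` be real analytic near `0 ∈ ℝ²`, with `g` having an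
isolated zero at the origin, and let
`h = y(g f_x − f g_x) − x(g f_y − f g_y)` be the discriminant.  Suppose `σ₁, …, σ_l` are the
real-coefficient analytic Puiseux parametrizations through the origin arising from the
factorization `h(t^N, y) = ∏ (y − σ_j(t))`, so that near the origin the real zero set of `h`
(away from `0`) is exactly `⋃ᵢ {(t^N, σᵢ(t)) : t ≠ 0 small}`.  Then
`lim_{(x,y)→(0,0)} f/g` exists iff each one-variable limit
`Lᵢ = lim_{t→0} f(t^N, σᵢ(t))/g(t^N, σᵢ(t))` exists and `L₁ = ⋯ = L_l`. -/
theorem stmt16 (f g : ℝ × ℝ → ℝ) (U : Set (ℝ × ℝ)) (hU : IsOpen U) (h0U : (0 : ℝ × ℝ) ∈ U)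
    (hf : AnalyticOnNhd ℝ f U) (hg : AnalyticOnNhd ℝ g U)
    (hiso : ∀ p ∈ U, p ≠ 0 → g p ≠ 0)
    (N : ℕ) (hN : 0 < N) (l : ℕ) (σ : Fin l → ℝ → ℝ)
    (hσa : ∀ i, AnalyticAt ℝ (σ i) 0) (hσ0 : ∀ i, σ i 0 = 0)
    (hX : ∃ ε > 0, ∀ p : ℝ × ℝ, p ≠ 0 → ‖p‖ < ε →
      ((p.2 * (g p * fderiv ℝ f p (1, 0) - f p * fderiv ℝ g p (1, 0)) -
        p.1 * (g p * fderiv ℝ f p (0, 1) - f p * fderiv ℝ g p (0, 1)) = 0) ↔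
       ∃ i : Fin l, ∃ t : ℝ, t ≠ 0 ∧ p = (t ^ N, σ i t))) :
    (∃ L : ℝ, Tendsto (fun p : ℝ × ℝ => f p / g p)
        (nhdsWithin 0 {p : ℝ × ℝ | p ≠ 0}) (nhds L)) ↔
    (∃ L : ℝ, ∀ i : Fin l, Tendsto (fun t : ℝ => f (t ^ N, σ i t) / g (t ^ N, σ i t))
        (nhdsWithin 0 {t : ℝ | t ≠ 0}) (nhds L)) := by
  refine ⟨fun ⟨L, hL⟩ => ⟨L, fun i => ?_⟩, fun ⟨L, hL⟩ => ⟨L, ?_⟩⟩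
  · exact hL.comp (tendsto_pow_prodMk_nhdsNE hN.ne' (hσa i).continuousAt (hσ0 i))
  · have hU0 : U ∈ 𝓝 0 := hU.mem_nhds h0U
    obtain ⟨ε, hε, hXε⟩ := hX
    refine tendsto_div_nhdsNE_of_tendsto_angularWronskian_eq_zero
      (Filter.mem_of_superset hU0 fun p hp => (hf p hp).differentiableAt)
      (Filter.mem_of_superset hU0 fun p hp => (hg p hp).differentiableAt)
      (mem_nhdsWithin.2 ⟨U, hU, h0U, fun p hp => hiso p hp.1 hp.2⟩)
      (tendsto_nhdsWithin_of_tendsto_comp_pow_prodMk hN.ne' ?_ hL)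
    filter_upwards [self_mem_nhdsWithin, nhdsWithin_le_nhds (Metric.ball_mem_nhds 0 hε)]
      with p ⟨hp0, hW⟩ hpε
    exact (hXε p hp0 (by rwa [Metric.mem_ball, dist_zero_right] at hpε)).1 hW
end
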